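/- arXiv:1911.02000 — 2 statements merged into one kernel-verified Lean document; each statement's English description precedes it below -/
import Mathlib

section
/- Let F ⊊ H be graphs on vertex set {1,…,k} and e = {1,2} ∈ E(H) \ E(F). Then there exist nonnegative integers a, b with a ≥ 1 and a + b ≤ k! such that for every bipartite graph G₀ of density d, the number of copies of F in the semi-blowup H ⊙_e G₀ (with one vertex per class) equals (a + bd)·|V₁|⋯|V_k|. In particular, n_F(H ⊙_e G₀) ≥ |V₁|⋯|V_k|. -/
open Finset

open scoped Classical

noncomputable section

/-- Number of (ordered) adjacent pairs between `S` and `T`. -/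
def edgeCount {V : Type*} (G : SimpleGraph V) (S T : Finset V) : ℕ :=
  ((S ×ˢ T).filter fun p => G.Adj p.1 p.2).card

/-- Edge density of `G` between `S` and `T`. -/
def density {V : Type*} (G : SimpleGraph V) (S T : Finset V) : ℝ :=
  (edgeCount G S T : ℝ) / ((S.card : ℝ) * (T.card : ℝ))

/-- `ε`-regularity (Szemerédi) of the bipartite graph induced by `G` between `V1` and `V2`. -/
def BipRegular {V : Type*} (G : SimpleGraph V) (V1 V2 : Finset V) (ε : ℝ) : Prop :=
  ∀ S ⊆ V1, ∀ T ⊆ V2, S.Nonempty → T.Nonempty →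
    ε * (V1.card : ℝ) ≤ (S.card : ℝ) → ε * (V2.card : ℝ) ≤ (T.card : ℝ) →
    |density G S T - density G V1 V2| ≤ ε

/-- Number of labeled copies of `F` in `G` with distinct vertices in distinct classes
`P 0, …, P (k-1)` (one vertex in each class, in any arrangement). -/
def labeledCount {k : ℕ} {V : Type*} (F : SimpleGraph (Fin k)) (G : SimpleGraph V)
    (P : Fin k → Finset V) : ℕ :=
  ∑ σ : Equiv.Perm (Fin k),
    ((Fintype.piFinset fun i => P (σ i)).filter
      fun v => ∀ i j, F.Adj i j → G.Adj (v i) (v j)).card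

/-- Number of automorphisms of `F`. -/
def autCount {k : ℕ} (F : SimpleGraph (Fin k)) : ℕ :=
  labeledCount F F fun i => {i}

/-- Number `n_F(G)` of unlabeled copies of `F` in `G` with distinct vertices in distinct
classes (one vertex per class). -/
def nCopies {k : ℕ} {V : Type*} (F : SimpleGraph (Fin k)) (G : SimpleGraph V)
    (P : Fin k → Finset V) : ℝ :=
  (labeledCount F G P : ℝ) / (autCount F : ℝ)

/-- The `(H,F)`-coefficient `c_{H,F}(G) = n_H(G)/n_F(G)` of the `k`-partite graph `G`
with classes `P`. -/
def coeff {k : ℕ} {V : Type*} (H F : SimpleGraph (Fin k)) (G : SimpleGraph V)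
    (P : Fin k → Finset V) : ℝ :=
  nCopies H G P / nCopies F G P

/-- The `k`-partite graph `G` with classes `P` is `ε`-`(H,F)`-regular. -/
def HFRegular {k : ℕ} {V : Type*} (H F : SimpleGraph (Fin k)) (G : SimpleGraph V)
    (P : Fin k → Finset V) (ε : ℝ) : Prop :=
  ∀ S : Fin k → Finset V, (∀ i, S i ⊆ P i) →
    ε * nCopies F G P ≤ nCopies F G S →
    |coeff H F G S - coeff H F G P| ≤ ε

/-- `G`, with classes `P`, is a blowup of `H`. -/
def IsBlowup {k : ℕ} {V : Type*} (G : SimpleGraph V) (H : SimpleGraph (Fin k))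
    (P : Fin k → Finset V) : Prop :=
  (∀ i, (P i).Nonempty) ∧
  (∀ i j, i ≠ j → Disjoint (P i) (P j)) ∧
  (∀ i, ∀ x ∈ P i, ∀ y ∈ P i, ¬ G.Adj x y) ∧
  (∀ i j, i ≠ j → ∀ x ∈ P i, ∀ y ∈ P j, (G.Adj x y ↔ H.Adj i j))

/-- `G`, with classes `P`, is a semi-blowup of `H` along the edge `{i₀, i₁} ∈ E(H)`:
between classes `P i, P j` with `{i,j} ≠ {i₀,i₁}` it is complete or empty bipartite
according to whether `{i,j} ∈ E(H)`, while between `P i₀` and `P i₁` the bipartite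
graph (the graph `G₀`) is arbitrary. -/
def IsSemiBlowup {k : ℕ} {V : Type*} (G : SimpleGraph V) (H : SimpleGraph (Fin k))
    (i₀ i₁ : Fin k) (P : Fin k → Finset V) : Prop :=
  i₀ ≠ i₁ ∧ H.Adj i₀ i₁ ∧
  (∀ i, (P i).Nonempty) ∧
  (∀ i j, i ≠ j → Disjoint (P i) (P j)) ∧
  (∀ i, ∀ x ∈ P i, ∀ y ∈ P i, ¬ G.Adj x y) ∧
  (∀ i j, ({i, j} : Finset (Fin k)) ≠ {i₀, i₁} → i ≠ j →
    ∀ x ∈ P i, ∀ y ∈ P j, (G.Adj x y ↔ H.Adj i j))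

/-- Number of labeled copies of `H` anywhere in `G`. -/
def totalLabeled {k : ℕ} {V : Type*} [Fintype V] (H : SimpleGraph (Fin k))
    (G : SimpleGraph V) : ℕ :=
  (Finset.univ.filter fun v : Fin k → V =>
    Function.Injective v ∧ ∀ i j, H.Adj i j → G.Adj (v i) (v j)).card

/-- Number `n_H(G)` of unlabeled copies of `H` anywhere in `G`. -/
def nCopiesTotal {k : ℕ} {V : Type*} [Fintype V] (H : SimpleGraph (Fin k))
    (G : SimpleGraph V) : ℝ :=
  (totalLabeled H G : ℝ) / (autCount H : ℝ)

/-- The vertex partition `Part` of `G` is `ε`-`(H,F)`-regular: all but at most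
`ε·n_H(G)` copies of `H` in `G` lie in induced `k`-partite subgraphs spanned by `k`
parts of `Part` that are `ε`-`(H,F)`-regular. (Each unlabeled copy lying in an injective
tuple of parts is counted `k!` times among ordered tuples, whence the `1/k!`.) -/
def HFRegularPartition {k : ℕ} {V : Type*} [Fintype V] (H F : SimpleGraph (Fin k))
    (G : SimpleGraph V) (Part : Finset (Finset V)) (ε : ℝ) : Prop :=
  nCopiesTotal H G - (Nat.factorial k : ℝ)⁻¹ *
      ∑ X ∈ (Fintype.piFinset fun _ : Fin k => Part).filter
          (fun X => Function.Injective X ∧ HFRegular H F G X ε),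
        nCopies H G X
    ≤ ε * nCopiesTotal H G

/-- The partition `QPart` is a `δ`-regular (Szemerédi) partition of the bipartite graph
induced by `G` between `V1` and `V2`. -/
def SzemerediPartition {V : Type*} (G : SimpleGraph V) (V1 V2 : Finset V)
    (QPart : Finset (Finset V)) (δ : ℝ) : Prop :=
  ∑ Y ∈ QPart, ∑ Y' ∈ QPart,
      (if Y ⊆ V1 ∧ Y' ⊆ V2 ∧ ¬ BipRegular G Y Y' δ
        then (Y.card : ℝ) * (Y'.card : ℝ) else 0)
    ≤ δ * ((V1.card : ℝ) * (V2.card : ℝ))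

/-- `Part` is a partition of the finite set `U` (into nonempty parts). -/
def IsPartitionOn {V : Type*} (Part : Finset (Finset V)) (U : Finset V) : Prop :=
  (∀ X ∈ Part, X.Nonempty) ∧ (∀ X ∈ Part, X ⊆ U) ∧
  (∀ x ∈ U, ∃! X, X ∈ Part ∧ x ∈ X)

/-- The tower function: `towerNat 0 = 1`, `towerNat (n+1) = 2 ^ towerNat n`. -/
def towerNat : ℕ → ℕ
  | 0 => 1
  | n + 1 => 2 ^ towerNat n

/-!
A labeled copy of `F` with one vertex in each class is a bijection `σ` from the vertices of `F`
to the classes together with a transversal homomorphism of the relabeled graph `σF` into `G`.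
In the semi-blowup the number of such homomorphisms is `0` if `σF ⊄ H`, the full product
`|V₁|⋯|V_k|` if `σF ⊆ H` avoids `e`, and `d·|V₁|⋯|V_k|` if `σF ⊆ H` uses `e`. So `n_F` is
`(A + B d)·|V₁|⋯|V_k| / |Aut F|`, where `A`, `B` count the relabelings of the last two kinds.
Both sets of relabelings are unions of cosets `σ · Aut F`, so `a = A / |Aut F|` and
`b = B / |Aut F|` are integers, and the identity relabeling gives `a ≥ 1`.
-/

def Submonoid.toSubgroupOfFinite {G : Type*} [Group G] [Finite G] (S : Submonoid G) :
    Subgroup G where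
  __ := S
  inv_mem' {x} hx := Submonoid.powers_le.mpr hx <|
    (isOfFinOrder_of_finite x).mem_powers_iff_mem_zpowers.mpr <|
      (Subgroup.zpowers x).inv_mem (Subgroup.mem_zpowers x)

theorem Subgroup.card_dvd_card_of_mul_mem {G : Type*} [Group G] (K : Subgroup G) (s : Finset G)
    (hs : ∀ g ∈ s, ∀ h ∈ K, g * h ∈ s) : Nat.card K ∣ #s := by
  have hsat : QuotientGroup.mk ⁻¹' (QuotientGroup.mk '' (s : Set G) : Set (G ⧸ K)) = s := by
    ext x
    constructor
    · rintro ⟨g, hg, hgx⟩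
      simpa using hs g hg _ (QuotientGroup.eq.mp hgx)
    · exact fun hx => ⟨x, hx, rfl⟩
  rw [← Set.ncard_coe_finset, ← hsat, ← Nat.card_coe_set_eq, QuotientGroup.card_preimage_mk]
  exact dvd_mul_right _ _

namespace SimpleGraph

variable {α : Type*}

def homPerms (F : SimpleGraph α) : Submonoid (Equiv.Perm α) where
  carrier := {σ | F ≤ F.comap σ}
  one_mem' _ _ h := h
  mul_mem' ha hb _ _ h := ha (hb h)

def autSubgroup (F : SimpleGraph α) [Finite α] : Subgroup (Equiv.Perm α) :=
  F.homPerms.toSubgroupOfFinite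

theorem comap_eq_of_mem_autSubgroup {F : SimpleGraph α} [Finite α] {τ : Equiv.Perm α}
    (hτ : τ ∈ F.autSubgroup) : F.comap τ = F := by
  refine le_antisymm (fun i j h => ?_) hτ
  simpa using F.autSubgroup.inv_mem hτ h

theorem comap_inv_mul_of_mem_autSubgroup {F : SimpleGraph α} [Finite α] (σ : Equiv.Perm α)
    {τ : Equiv.Perm α} (hτ : τ ∈ F.autSubgroup) : F.comap ⇑(σ * τ)⁻¹ = F.comap ⇑σ⁻¹ := by
  rw [mul_inv_rev, Equiv.Perm.coe_mul, ← comap_comap,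
    comap_eq_of_mem_autSubgroup (F.autSubgroup.inv_mem hτ)]

/-- `F.comap σ⁻¹` is `F` with each vertex `v` renamed `σ v`. -/
def relabelingsSatisfying [Fintype α] [DecidableEq α] (F : SimpleGraph α)
    (p : SimpleGraph α → Prop) [DecidablePred p] : Finset (Equiv.Perm α) :=
  {σ | p (F.comap ⇑σ⁻¹)}

theorem card_autSubgroup_dvd [Fintype α] [DecidableEq α] (F : SimpleGraph α)
    (p : SimpleGraph α → Prop) [DecidablePred p] :
    Nat.card F.autSubgroup ∣ #(F.relabelingsSatisfying p) :=
  F.autSubgroup.card_dvd_card_of_mul_mem _ fun σ hσ τ hτ => by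
    simp only [relabelingsSatisfying, mem_filter, mem_univ, true_and] at hσ ⊢
    rwa [comap_inv_mul_of_mem_autSubgroup σ hτ]

end SimpleGraph

theorem autCount_eq_card_autSubgroup {k : ℕ} (F : SimpleGraph (Fin k)) :
    autCount F = Nat.card F.autSubgroup := by
  rw [Nat.card_eq_fintype_card, Fintype.card_subtype, card_filter, autCount, labeledCount]
  refine sum_congr rfl fun σ _ => ?_
  rw [Fintype.piFinset_singleton, filter_singleton, apply_ite card, card_singleton, card_empty]
  exact if_congr Iff.rfl rfl rfl

theorem card_filter_piFinset_apply_apply {ι α : Type*} [Fintype ι] [DecidableEq ι]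
    (P : ι → Finset α) {i₀ i₁ : ι} (h : i₀ ≠ i₁) (r : α → α → Prop) :
    #{w ∈ Fintype.piFinset P | r (w i₀) (w i₁)} =
      #{z ∈ P i₀ ×ˢ P i₁ | r z.1 z.2} * ∏ i ∈ {i₀, i₁}ᶜ, #(P i) := by
  have hmaps : ∀ w ∈ {w ∈ Fintype.piFinset P | r (w i₀) (w i₁)},
      (w i₀, w i₁) ∈ {z ∈ P i₀ ×ˢ P i₁ | r z.1 z.2} := fun w hw => by
    simp_all [Fintype.mem_piFinset]
  rw [card_eq_sum_card_fiberwise hmaps, ← smul_eq_mul, ← sum_const]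
  refine sum_congr rfl fun z hz => ?_
  have hfiber : {w ∈ {w ∈ Fintype.piFinset P | r (w i₀) (w i₁)} | (w i₀, w i₁) = z} =
      Fintype.piFinset (Function.update (Function.update P i₀ {z.1}) i₁ {z.2}) := by
    simp only [mem_filter, mem_product] at hz
    ext w
    simp only [mem_filter, Fintype.mem_piFinset, Function.update_apply]
    grind
  rw [hfiber, Fintype.card_piFinset, ← prod_mul_prod_compl {i₀, i₁}, prod_pair h]
  simp only [Function.update_self, Function.update_of_ne h, card_singleton, one_mul]
  refine prod_congr rfl fun i hi => ?_
  simp only [mem_compl, mem_insert, mem_singleton, not_or] at hi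
  rw [Function.update_of_ne hi.2, Function.update_of_ne hi.1]

theorem density_mul_prod_card {ι V : Type*} [Fintype ι] [DecidableEq ι] (G : SimpleGraph V)
    (P : ι → Finset V) {i₀ i₁ : ι} (h : i₀ ≠ i₁) :
    density G (P i₀) (P i₁) * ∏ i, (#(P i) : ℝ) =
      #{w ∈ Fintype.piFinset P | G.Adj (w i₀) (w i₁)} := by
  have hprod := card_filter_piFinset_apply_apply P h fun _ _ => True
  simp only [filter_true, Fintype.card_piFinset, card_product] at hprod
  have hE : edgeCount G (P i₀) (P i₁) ≤ #(P i₀) * #(P i₁) :=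
    (card_filter_le _ _).trans (card_product _ _).le
  rw [card_filter_piFinset_apply_apply P h, ← Nat.cast_prod, hprod, density]
  unfold edgeCount at hE ⊢
  rcases Nat.eq_zero_or_pos (#(P i₀) * #(P i₁)) with h0 | h0
  · simp [h0, Nat.le_zero.mp (h0 ▸ hE)]
  · have h0' : ((#(P i₀) * #(P i₁) : ℕ) : ℝ) ≠ 0 := by positivity
    push_cast at h0' ⊢
    rw [div_mul_eq_mul_div, div_eq_iff h0']
    ring

def partiteHoms {ι V : Type*} [Fintype ι] [DecidableEq ι] (F : SimpleGraph ι)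
    (G : SimpleGraph V) (P : ι → Finset V) : Finset (ι → V) :=
  {w ∈ Fintype.piFinset P | ∀ i j, F.Adj i j → G.Adj (w i) (w j)}

theorem labeledCount_eq_sum_card_partiteHoms {k : ℕ} {V : Type*} (F : SimpleGraph (Fin k))
    (G : SimpleGraph V) (P : Fin k → Finset V) :
    labeledCount F G P = ∑ σ : Equiv.Perm (Fin k), #(partiteHoms (F.comap ⇑σ⁻¹) G P) := by
  refine sum_congr rfl fun σ _ => card_nbij' (· ∘ ⇑σ⁻¹) (· ∘ σ) ?_ ?_ ?_ ?_
  · intro v hv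
    simp only [coe_filter, Fintype.mem_piFinset, Set.mem_ofPred_eq, partiteHoms] at hv ⊢
    exact ⟨fun i => by simpa using hv.1 (σ⁻¹ i), fun i j h => hv.2 _ _ h⟩
  · intro w hw
    simp only [coe_filter, Fintype.mem_piFinset, Set.mem_ofPred_eq, partiteHoms] at hw ⊢
    exact ⟨fun i => hw.1 (σ i), fun i j h => hw.2 (σ i) (σ j) (by simpa using h)⟩
  · intro v _
    ext i
    simp
  · intro w _
    ext i
    simp

namespace IsSemiBlowup

variable {k : ℕ} {V : Type*} {G : SimpleGraph V} {H F : SimpleGraph (Fin k)} {i₀ i₁ : Fin k}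
  {P : Fin k → Finset V}

theorem adj_iff (hG : IsSemiBlowup G H i₀ i₁ P) {i j : Fin k} (hij : i ≠ j)
    (he : s(i, j) ≠ s(i₀, i₁)) {x y : V} (hx : x ∈ P i) (hy : y ∈ P j) :
    G.Adj x y ↔ H.Adj i j := by
  refine hG.2.2.2.2.2 i j (fun hp => he ?_) hij x hx y hy
  rw [← coe_inj, coe_pair, coe_pair] at hp
  exact Sym2.eq_iff.mpr (Set.pair_eq_pair_iff.mp hp)

theorem partiteHoms_eq_empty (hG : IsSemiBlowup G H i₀ i₁ P) (h : ¬F ≤ H) :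
    partiteHoms F G P = ∅ := by
  refine eq_empty_iff_forall_notMem.mpr fun w hw => ?_
  simp only [partiteHoms, mem_filter, Fintype.mem_piFinset] at hw
  obtain ⟨i, j, hF, hH⟩ : ∃ i j, F.Adj i j ∧ ¬H.Adj i j := by
    simpa [SimpleGraph.le_iff_adj] using h
  have he : s(i, j) ≠ s(i₀, i₁) := fun he => hH <| by
    rw [← SimpleGraph.mem_edgeSet, he]
    exact hG.2.1
  exact hH ((hG.adj_iff hF.ne he (hw.1 i) (hw.1 j)).mp (hw.2 i j hF))

theorem partiteHoms_eq_piFinset (hG : IsSemiBlowup G H i₀ i₁ P) (h : F ≤ H)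
    (hne : ¬F.Adj i₀ i₁) : partiteHoms F G P = Fintype.piFinset P := by
  ext w
  simp only [partiteHoms, mem_filter, and_iff_left_iff_imp, Fintype.mem_piFinset]
  intro hw i j hF
  have he : s(i, j) ≠ s(i₀, i₁) := fun he => hne <| by
    rw [← SimpleGraph.mem_edgeSet, ← he]
    exact hF
  exact (hG.adj_iff hF.ne he (hw i) (hw j)).mpr (h hF)

theorem partiteHoms_eq_filter_adj (hG : IsSemiBlowup G H i₀ i₁ P) (h : F ≤ H)
    (hadj : F.Adj i₀ i₁) :
    partiteHoms F G P = {w ∈ Fintype.piFinset P | G.Adj (w i₀) (w i₁)} := by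
  ext w
  simp only [partiteHoms, mem_filter, Fintype.mem_piFinset, and_congr_right_iff]
  refine fun hw => ⟨fun hw' => hw' i₀ i₁ hadj, fun hw' i j hF => ?_⟩
  by_cases he : s(i, j) = s(i₀, i₁)
  · rcases Sym2.eq_iff.mp he with ⟨rfl, rfl⟩ | ⟨rfl, rfl⟩
    exacts [hw', hw'.symm]
  · exact (hG.adj_iff hF.ne he (hw i) (hw j)).mpr (h hF)

theorem labeledCount_eq (hG : IsSemiBlowup G H i₀ i₁ P) (F : SimpleGraph (Fin k)) :
    labeledCount F G P =
      #(F.relabelingsSatisfying fun F' => F' ≤ H ∧ ¬F'.Adj i₀ i₁) * ∏ i, #(P i) +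
      #(F.relabelingsSatisfying fun F' => F' ≤ H ∧ F'.Adj i₀ i₁) *
        #{w ∈ Fintype.piFinset P | G.Adj (w i₀) (w i₁)} := by
  have hterm : ∀ F' : SimpleGraph (Fin k), #(partiteHoms F' G P) =
      (if F' ≤ H ∧ ¬F'.Adj i₀ i₁ then ∏ i, #(P i) else 0) +
      (if F' ≤ H ∧ F'.Adj i₀ i₁ then #{w ∈ Fintype.piFinset P | G.Adj (w i₀) (w i₁)}
        else 0) := by
    intro F'
    by_cases hle : F' ≤ H
    · by_cases hadj : F'.Adj i₀ i₁
      · simp [hG.partiteHoms_eq_filter_adj hle hadj, hle, hadj]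
      · simp [hG.partiteHoms_eq_piFinset hle hadj, hle, hadj]
    · simp [hG.partiteHoms_eq_empty hle, hle]
  rw [labeledCount_eq_sum_card_partiteHoms, SimpleGraph.relabelingsSatisfying,
    SimpleGraph.relabelingsSatisfying, ← smul_eq_mul, ← sum_const, ← smul_eq_mul, ← sum_const,
    sum_filter, sum_filter, ← sum_add_distrib]
  exact sum_congr rfl fun σ _ => hterm _

theorem nCopies_mul_card_autSubgroup (hG : IsSemiBlowup G H i₀ i₁ P)
    (F : SimpleGraph (Fin k)) :
    nCopies F G P * Nat.card F.autSubgroup =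
      (#(F.relabelingsSatisfying fun F' => F' ≤ H ∧ ¬F'.Adj i₀ i₁) +
        #(F.relabelingsSatisfying fun F' => F' ≤ H ∧ F'.Adj i₀ i₁) * density G (P i₀) (P i₁)) *
        ∏ i, (#(P i) : ℝ) := by
  rw [nCopies, autCount_eq_card_autSubgroup,
    div_mul_cancel₀ _ (Nat.cast_ne_zero.mpr Nat.card_pos.ne'), hG.labeledCount_eq F]
  push_cast
  rw [add_mul, mul_assoc, density_mul_prod_card G P hG.1]

end IsSemiBlowup

theorem stmt8_general {k : ℕ} (H F : SimpleGraph (Fin k)) (i₀ i₁ : Fin k)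
    (hF : F ≤ H) (heF : ¬ F.Adj i₀ i₁) :
    ∃ a b : ℕ, 1 ≤ a ∧ a + b ≤ Nat.factorial k ∧
      ∀ (V : Type) (G : SimpleGraph V) (P : Fin k → Finset V),
        IsSemiBlowup G H i₀ i₁ P →
          nCopies F G P =
            ((a : ℝ) + (b : ℝ) * density G (P i₀) (P i₁)) * ∏ i, ((P i).card : ℝ) ∧
          (∏ i, ((P i).card : ℝ)) ≤ nCopies F G P := by
  obtain ⟨a, hA⟩ := F.card_autSubgroup_dvd fun F' => F' ≤ H ∧ ¬F'.Adj i₀ i₁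
  obtain ⟨b, hB⟩ := F.card_autSubgroup_dvd fun F' => F' ≤ H ∧ F'.Adj i₀ i₁
  have hc : 0 < Nat.card F.autSubgroup := Nat.card_pos
  have ha : 1 ≤ a := by
    refine Nat.pos_of_mul_pos_left (hA ▸ card_pos.mpr ⟨1, ?_⟩)
    simpa [SimpleGraph.relabelingsSatisfying] using ⟨hF, heF⟩
  have hab : Nat.card F.autSubgroup * a + Nat.card F.autSubgroup * b ≤ k.factorial := by
    rw [← hA, ← hB, ← card_union_of_disjoint]
    · exact (card_le_univ _).trans (by simp [Fintype.card_perm])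
    · exact disjoint_filter.mpr fun _ _ h h' => h.2 h'.2
  refine ⟨a, b, ha, ?_, fun V G P hG => ?_⟩
  · exact (Nat.add_le_add (Nat.le_mul_of_pos_left a hc) (Nat.le_mul_of_pos_left b hc)).trans hab
  have hcount : nCopies F G P =
      ((a : ℝ) + (b : ℝ) * density G (P i₀) (P i₁)) * ∏ i, ((P i).card : ℝ) := by
    have h := hG.nCopies_mul_card_autSubgroup F
    rw [hA, hB] at h
    push_cast at h
    refine mul_right_cancel₀ (Nat.cast_ne_zero.mpr hc.ne') (h.trans ?_)
    ring
  have hdensity : 0 ≤ density G (P i₀) (P i₁) := by unfold density; positivity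
  refine ⟨hcount, hcount ▸ le_mul_of_one_le_left (by positivity) ?_⟩
  exact le_add_of_le_of_nonneg (by exact_mod_cast ha) (mul_nonneg (Nat.cast_nonneg b) hdensity)

/-- There are integers `a ≥ 1`, `b ≥ 0` with `a + b ≤ k!` such that for every semi-blowup
of `H` along `e ∈ E(H)\E(F)` with replacement bipartite graph of density `d`,
`n_F = (a + bd)·|V₁|⋯|V_k| ≥ |V₁|⋯|V_k|`. -/
theorem stmt8 {k : ℕ} (H F : SimpleGraph (Fin k)) (i₀ i₁ : Fin k)
    (hF : F ≤ H) (hFH : F ≠ H) (he : H.Adj i₀ i₁) (heF : ¬ F.Adj i₀ i₁) :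
    ∃ a b : ℕ, 1 ≤ a ∧ a + b ≤ Nat.factorial k ∧
      ∀ (V : Type) (G : SimpleGraph V) (P : Fin k → Finset V),
        IsSemiBlowup G H i₀ i₁ P →
          nCopies F G P =
            ((a : ℝ) + (b : ℝ) * density G (P i₀) (P i₁)) * ∏ i, ((P i).card : ℝ) ∧
          (∏ i, ((P i).card : ℝ)) ≤ nCopies F G P :=
  stmt8_general H F i₀ i₁ hF heF
end
end

section
/- Let F ⊊ H be graphs on {1,…,k} and e = {1,2} ∈ E(H) \ E(F). If the semi-blowup G = H ⊙_e G₀ is ε-(H,F)-regular, then the bipartite graph G₀ is (√ε · k^{2k})-regular. -/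
open Finset

open scoped Classical

noncomputable section

/-!
Shrinking the classes `P i₀, P i₁` of the semi-blowup to `S, T` changes the number of copies of
any `J` only through the density `d = d(S, T)`, because every other pair of classes is complete
or empty: `n_J = (a_J + b_J d) ∏ |Q i| / aut J`, where `a_J` and `b_J` count the placements of
`J` into `H` (exact away from `{i₀, i₁}`) that avoid, resp. use, the pair `{i₀, i₁}`. No
placement of `H` avoids one of its own edges, so `a_H = 0`, while `a_F ≥ 1`; hence
`c_{H,F} = C d / (a_F + b_F d)` is a Möbius function of `d` with `|Δc| ≥ |Δd| / (k!)³`.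
When `|S|, |T| ≥ δ |V_i|` with `δ = √ε k^{2k}`, the count `n_F` drops by a factor at most
`δ² ≥ ε k!`, so `(H,F)`-regularity gives `|d(S,T) - d(G₀)| ≤ (k!)³ ε`, which is at most `δ`
once `δ < 1`; for `δ ≥ 1` there is nothing to prove.
-/

open Function
open scoped Nat

lemma Function.forall_update_update {ι α : Type*} [DecidableEq ι] {P : ι → α} {i₀ i₁ : ι}
    {S T : α} (p : ι → α → Prop) (hP : ∀ i, p i (P i)) (hS : p i₀ S) (hT : p i₁ T) :
    ∀ i, p i (update (update P i₀ S) i₁ T i) :=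
  (forall_update_iff _ p).2 ⟨hT, fun i _ => (forall_update_iff P p).2 ⟨hS, fun j _ => hP j⟩ i⟩

lemma Finset.pair_eq_pair_iff {α : Type*} [DecidableEq α] {a b c d : α} :
    ({a, b} : Finset α) = {c, d} ↔ a = c ∧ b = d ∨ a = d ∧ b = c := by
  rw [← coe_inj, coe_pair, coe_pair, Set.pair_eq_pair_iff]

lemma Finset.prod_univ_eq_mul_mul_prod_erase_erase {ι M : Type*} [Fintype ι] [DecidableEq ι]
    [CommMonoid M] (f : ι → M) {i j : ι} (hij : i ≠ j) :
    ∏ x, f x = f i * f j * ∏ x ∈ (univ.erase i).erase j, f x := by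
  rw [← mul_prod_erase _ _ (mem_univ i), ← mul_prod_erase _ _ (mem_erase.2 ⟨hij.symm, mem_univ j⟩),
    mul_assoc]

lemma sq_mul_prod_card_le_prod_card_update {ι α : Type*} [Fintype ι] [DecidableEq ι]
    (P : ι → Finset α) {i₀ i₁ : ι} (hne : i₀ ≠ i₁) {S T : Finset α} {δ : ℝ} (hδ : 0 ≤ δ)
    (hS : δ * #(P i₀) ≤ #S) (hT : δ * #(P i₁) ≤ #T) :
    δ ^ 2 * ∏ i, (#(P i) : ℝ) ≤ ∏ i, (#(update (update P i₀ S) i₁ T i) : ℝ) := by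
  rw [prod_univ_eq_mul_mul_prod_erase_erase _ hne, prod_univ_eq_mul_mul_prod_erase_erase _ hne,
    update_self, update_of_ne hne, update_self]
  have hrest : ∏ i ∈ (univ.erase i₀).erase i₁, (#(update (update P i₀ S) i₁ T i) : ℝ)
      = ∏ i ∈ (univ.erase i₀).erase i₁, (#(P i) : ℝ) := by
    refine prod_congr rfl fun i hi => ?_
    rw [mem_erase, mem_erase] at hi
    rw [update_of_ne hi.1, update_of_ne hi.2.1]
  rw [hrest, ← mul_assoc, sq, mul_mul_mul_comm]
  gcongr

lemma card_filter_piFinset_two {ι α : Type*} [Fintype ι] [DecidableEq ι] (R : ι → Finset α)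
    {p q : ι} (hpq : p ≠ q) (r : α → α → Prop) [DecidableRel r] :
    #{v ∈ Fintype.piFinset R | r (v p) (v q)}
      = #{z ∈ R p ×ˢ R q | r z.1 z.2} * ∏ i ∈ (univ.erase p).erase q, #(R i) := by
  rw [card_eq_sum_card_fiberwise (f := fun v => (v p, v q)) (t := {z ∈ R p ×ˢ R q | r z.1 z.2})
    (fun v hv => by simp_all [Fintype.mem_piFinset])]
  refine sum_const_nat fun ⟨a, b⟩ hz => ?_
  rw [mem_filter, mem_product] at hz
  have hfiber : {v ∈ {v ∈ Fintype.piFinset R | r (v p) (v q)} | (v p, v q) = (a, b)}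
      = Fintype.piFinset (update (update R p {a}) q {b}) := by
    ext v
    simp only [mem_filter, Fintype.mem_piFinset, Prod.ext_iff]
    constructor
    · rintro ⟨⟨hv, -⟩, rfl, rfl⟩ i
      by_cases hiq : i = q
      · subst hiq; simp
      by_cases hip : i = p
      · subst hip; simp [hiq]
      simp [hip, hiq, hv i]
    · intro hv
      have hp : v p = a := by simpa [hpq] using hv p
      have hq : v q = b := by simpa using hv q
      refine ⟨⟨fun i => ?_, hp ▸ hq ▸ hz.2⟩, hp, hq⟩
      by_cases hiq : i = q
      · subst hiq; exact hq ▸ hz.1.2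
      by_cases hip : i = p
      · subst hip; exact hp ▸ hz.1.1
      simpa [hip, hiq] using hv i
  rw [hfiber, Fintype.card_piFinset, ← mul_prod_erase _ _ (mem_univ p),
    ← mul_prod_erase _ _ (mem_erase.2 ⟨hpq.symm, mem_univ q⟩)]
  simp only [update_self, update_of_ne hpq, card_singleton, one_mul]
  refine prod_congr rfl fun i hi => ?_
  rw [mem_erase, mem_erase] at hi
  rw [update_of_ne hi.1, update_of_ne hi.2.1]

lemma card_filter_piFinset_comp_perm {ι V : Type*} [Fintype ι] [DecidableEq ι]
    (σ : Equiv.Perm ι) (Q : ι → Finset V) (J : SimpleGraph ι) (G : SimpleGraph V) :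
    #{v ∈ Fintype.piFinset (fun i => Q (σ i)) | ∀ i j, J.Adj i j → G.Adj (v i) (v j)}
      = #{w ∈ Fintype.piFinset Q | ∀ a b, (J.comap σ.symm).Adj a b → G.Adj (w a) (w b)} := by
  refine card_nbij' (fun v => v ∘ σ.symm) (fun w => w ∘ σ) ?_ ?_ ?_ ?_
  · intro v hv
    simp only [coe_filter, Fintype.mem_piFinset, Set.mem_ofPred_eq, SimpleGraph.comap_adj,
      comp_apply] at hv ⊢
    exact ⟨fun a => by simpa using hv.1 (σ.symm a), fun a b h => hv.2 _ _ h⟩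
  · intro w hw
    simp only [coe_filter, Fintype.mem_piFinset, Set.mem_ofPred_eq, SimpleGraph.comap_adj,
      comp_apply] at hw ⊢
    exact ⟨fun i => hw.1 (σ i), fun i j h => hw.2 _ _ (by simpa using h)⟩
  · intro v _; ext i; simp
  · intro w _; ext a; simp

lemma SimpleGraph.comap_eq_self_of_comap_le {V : Type*} [Finite V] (σ : V ≃ V)
    (H : SimpleGraph V) (h : H.comap σ ≤ H) : H.comap σ = H := by
  have := Fintype.ofFinite V
  classical
  refine SimpleGraph.edgeFinset_inj.1 (eq_of_subset_of_card_le (SimpleGraph.edgeFinset_mono h) ?_)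
  exact ((SimpleGraph.Iso.comap σ H).card_edgeFinset_eq).ge

section Density

variable {V : Type*} (G : SimpleGraph V) (S T : Finset V)

lemma edgeCount_le_card_mul_card : edgeCount G S T ≤ #S * #T :=
  card_product S T ▸ card_filter_le _ _

lemma density_nonneg : 0 ≤ density G S T := by
  unfold density; positivity

lemma density_le_one : density G S T ≤ 1 :=
  div_le_one_of_le₀ (by exact_mod_cast edgeCount_le_card_mul_card G S T) (by positivity)

lemma edgeCount_eq_density_mul : (edgeCount G S T : ℝ) = density G S T * (#S * #T) := by
  rcases eq_or_ne ((#S : ℝ) * #T) 0 with h | h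
  · have hle : (edgeCount G S T : ℝ) ≤ #S * #T := by
      exact_mod_cast edgeCount_le_card_mul_card G S T
    rw [h, mul_zero]
    exact le_antisymm (h ▸ hle) (Nat.cast_nonneg _)
  · exact (div_mul_cancel₀ _ h).symm

lemma density_mem_Icc : density G S T ∈ Set.Icc (0 : ℝ) 1 :=
  ⟨density_nonneg G S T, density_le_one G S T⟩

end Density

section Arithmetic

lemma abs_sub_le_sq_mul_abs_div_sub_div {a b x y : ℝ} (ha : 1 ≤ a) (hb : 0 ≤ b)
    (hx : x ∈ Set.Icc (0 : ℝ) 1) (hy : y ∈ Set.Icc (0 : ℝ) 1) :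
    |x - y| ≤ (a + b) ^ 2 * |x / (a + b * x) - y / (a + b * y)| := by
  obtain ⟨hx0, hx1⟩ := hx
  obtain ⟨hy0, hy1⟩ := hy
  have hax : 0 < a + b * x := by positivity
  have hay : 0 < a + b * y := by positivity
  have hdiff : x / (a + b * x) - y / (a + b * y) = a * (x - y) / ((a + b * x) * (a + b * y)) := by
    field_simp
    ring
  have hden : (a + b * x) * (a + b * y) ≤ (a + b) ^ 2 * a := by
    nlinarith [mul_le_mul_of_nonneg_left hx1 hb, mul_le_mul_of_nonneg_left hy1 hb]
  rw [hdiff, abs_div, abs_mul, abs_of_pos (by linarith : 0 < a), abs_of_pos (mul_pos hax hay),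
    mul_div_assoc', le_div_iff₀ (mul_pos hax hay)]
  nlinarith [abs_nonneg (x - y)]

lemma abs_sub_le_of_abs_mul_div_sub_mul_div_le {a b c x y ε K : ℝ} (ha : 1 ≤ a) (hb : 0 ≤ b)
    (hK : a + b ≤ K) (hc : 1 ≤ K * c) (hx : x ∈ Set.Icc (0 : ℝ) 1) (hy : y ∈ Set.Icc (0 : ℝ) 1)
    (h : |c * (x / (a + b * x)) - c * (y / (a + b * y))| ≤ ε) :
    |x - y| ≤ K ^ 3 * ε := by
  have hK0 : 0 < K := by linarith
  have hc0 : 0 ≤ c := nonneg_of_mul_nonneg_right (by linarith) hK0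
  have hφ : |x / (a + b * x) - y / (a + b * y)| ≤ K * ε := by
    rw [← mul_sub, abs_mul, abs_of_nonneg hc0] at h
    nlinarith [abs_nonneg (x / (a + b * x) - y / (a + b * y))]
  calc |x - y| ≤ (a + b) ^ 2 * |x / (a + b * x) - y / (a + b * y)| :=
        abs_sub_le_sq_mul_abs_div_sub_div ha hb hx hy
    _ ≤ K ^ 2 * (K * ε) := by gcongr
    _ = K ^ 3 * ε := by ring

lemma Nat.pow_self_le_pow_mul_self (k : ℕ) {m : ℕ} (hm : 1 ≤ m) : k ^ k ≤ k ^ (m * k) := by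
  rcases k.eq_zero_or_pos with rfl | hk
  · simp
  · exact Nat.pow_le_pow_right hk (Nat.le_mul_of_pos_left k hm)

lemma mul_factorial_le_sq_sqrt_mul_pow {ε : ℝ} (hε : 0 ≤ ε) (k : ℕ) :
    ε * k ! ≤ (√ε * (k : ℝ) ^ (2 * k)) ^ 2 := by
  rw [mul_pow, Real.sq_sqrt hε, ← pow_mul, show 2 * k * 2 = 4 * k by ring]
  gcongr
  exact_mod_cast k.factorial_le_pow.trans (k.pow_self_le_pow_mul_self (by norm_num))

lemma mul_factorial_pow_three_le {ε : ℝ} (hε : 0 ≤ ε) {k : ℕ}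
    (h : √ε * (k : ℝ) ^ (2 * k) < 1) : ε * k ! ^ 3 ≤ √ε * (k : ℝ) ^ (2 * k) := by
  have hfac : ((k ! : ℕ) : ℝ) ≤ (k : ℝ) ^ k := by exact_mod_cast k.factorial_le_pow
  have hpow : (k : ℝ) ^ k ≤ (k : ℝ) ^ (2 * k) := by
    exact_mod_cast k.pow_self_le_pow_mul_self (by norm_num)
  have hsmall : √ε * (k : ℝ) ^ k ≤ 1 :=
    (mul_le_mul_of_nonneg_left hpow (Real.sqrt_nonneg ε)).trans h.le
  calc ε * k ! ^ 3 ≤ ε * ((k : ℝ) ^ k) ^ 3 := by gcongr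
    _ = (√ε * (k : ℝ) ^ (2 * k)) * (√ε * (k : ℝ) ^ k) := by
        linear_combination -((k : ℝ) ^ k) ^ 3 * Real.mul_self_sqrt hε
    _ ≤ √ε * (k : ℝ) ^ (2 * k) := mul_le_of_le_one_right (by positivity) hsmall

end Arithmetic

section AutCount

variable {k : ℕ} (J : SimpleGraph (Fin k))

lemma autCount_pos : 0 < autCount J :=
  sum_pos' (fun _ _ => Nat.zero_le _) ⟨1, mem_univ _, card_pos.2 ⟨id, by simp⟩⟩

lemma autCount_le_factorial : autCount J ≤ k ! := by
  refine (sum_le_card_nsmul _ _ 1 fun σ _ => ?_).trans (by simp [Fintype.card_perm])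
  refine (card_filter_le _ _).trans ?_
  simp

end AutCount

section SemiBlowup

variable {k : ℕ} {V : Type*}

def LeOffPair (J H : SimpleGraph (Fin k)) (i₀ i₁ : Fin k) : Prop :=
  ∀ a b, J.Adj a b → ({a, b} : Finset (Fin k)) ≠ {i₀, i₁} → H.Adj a b

/-- `J.comap σ.symm` is the copy of `J` whose vertex `j` lies in class `σ j`. -/
def placements (H J : SimpleGraph (Fin k)) (i₀ i₁ : Fin k) : Finset (Equiv.Perm (Fin k)) :=
  {σ | LeOffPair (J.comap σ.symm) H i₀ i₁}

def placementsThrough (H J : SimpleGraph (Fin k)) (i₀ i₁ : Fin k) : ℕ :=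
  #{σ ∈ placements H J i₀ i₁ | J.Adj (σ.symm i₀) (σ.symm i₁)}

def placementsAvoiding (H J : SimpleGraph (Fin k)) (i₀ i₁ : Fin k) : ℕ :=
  #{σ ∈ placements H J i₀ i₁ | ¬ J.Adj (σ.symm i₀) (σ.symm i₁)}

variable {H F J : SimpleGraph (Fin k)} {i₀ i₁ : Fin k} {G : SimpleGraph V}
  {P Q : Fin k → Finset V}

lemma LeOffPair.le (h : LeOffPair J H i₀ i₁) (hJ : ¬ J.Adj i₀ i₁) : J ≤ H := by
  intro a b hab
  by_cases hp : ({a, b} : Finset (Fin k)) = {i₀, i₁}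
  · rcases Finset.pair_eq_pair_iff.1 hp with ⟨rfl, rfl⟩ | ⟨rfl, rfl⟩
    exacts [absurd hab hJ, absurd hab.symm hJ]
  · exact h a b hab hp

/-- A copy of `H` avoiding one of its own edges would be a proper subgraph of `H` isomorphic
to `H`. -/
lemma placementsAvoiding_self_eq_zero (he : H.Adj i₀ i₁) : placementsAvoiding H H i₀ i₁ = 0 := by
  refine card_eq_zero.2 (filter_eq_empty_iff.2 fun σ hσ hσe => hσe ?_)
  have hle := (mem_filter.1 hσ).2.le hσe
  rwa [← SimpleGraph.comap_eq_self_of_comap_le σ.symm H hle] at he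

lemma placementsThrough_self_pos (he : H.Adj i₀ i₁) : 0 < placementsThrough H H i₀ i₁ :=
  card_pos.2 ⟨1, mem_filter.2 ⟨mem_filter.2 ⟨mem_univ _, fun _ _ hab _ => hab⟩, he⟩⟩

lemma placementsAvoiding_pos (hF : F ≤ H) (heF : ¬ F.Adj i₀ i₁) :
    0 < placementsAvoiding H F i₀ i₁ :=
  card_pos.2 ⟨1, mem_filter.2 ⟨mem_filter.2 ⟨mem_univ _, fun _ _ hab _ => hF hab⟩, heF⟩⟩

lemma placementsAvoiding_add_placementsThrough_le :
    placementsAvoiding H J i₀ i₁ + placementsThrough H J i₀ i₁ ≤ k ! := by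
  rw [placementsAvoiding, placementsThrough, add_comm, card_filter_add_card_filter_not]
  simpa [Fintype.card_perm] using card_le_univ (placements H J i₀ i₁)

lemma card_filter_piFinset_semiBlowup (hsb : IsSemiBlowup G H i₀ i₁ P) (hQ : ∀ i, Q i ⊆ P i) :
    #{w ∈ Fintype.piFinset Q | ∀ a b, J.Adj a b → G.Adj (w a) (w b)}
      = if LeOffPair J H i₀ i₁ then
          #{z ∈ Q i₀ ×ˢ Q i₁ | J.Adj i₀ i₁ → G.Adj z.1 z.2} * ∏ i ∈ (univ.erase i₀).erase i₁, #(Q i)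
        else 0 := by
  obtain ⟨hne, -, -, -, -, hout⟩ := hsb
  have hGH : ∀ w ∈ Fintype.piFinset Q, ∀ a b, J.Adj a b →
      ({a, b} : Finset (Fin k)) ≠ {i₀, i₁} → (G.Adj (w a) (w b) ↔ H.Adj a b) :=
    fun w hw a b hab hp => hout a b hp hab.ne _ (hQ a (Fintype.mem_piFinset.1 hw a)) _
      (hQ b (Fintype.mem_piFinset.1 hw b))
  split_ifs with hle
  · rw [← card_filter_piFinset_two Q hne fun x y => J.Adj i₀ i₁ → G.Adj x y]
    refine congrArg card (filter_congr fun w hw => ⟨fun h => h _ _, fun h a b hab => ?_⟩)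
    by_cases hp : ({a, b} : Finset (Fin k)) = {i₀, i₁}
    · rcases Finset.pair_eq_pair_iff.1 hp with ⟨rfl, rfl⟩ | ⟨rfl, rfl⟩
      exacts [h hab, (h hab.symm).symm]
    · exact (hGH w hw a b hab hp).2 (hle a b hab hp)
  · simp only [LeOffPair, not_forall] at hle
    obtain ⟨a, b, hab, hp, hH⟩ := hle
    exact card_eq_zero.2 <| filter_eq_empty_iff.2 fun w hw h =>
      hH ((hGH w hw a b hab hp).1 (h a b hab))

lemma labeledCount_semiBlowup (hsb : IsSemiBlowup G H i₀ i₁ P) (hQ : ∀ i, Q i ⊆ P i) :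
    labeledCount J G Q = ∑ σ ∈ placements H J i₀ i₁,
      #{z ∈ Q i₀ ×ˢ Q i₁ | J.Adj (σ.symm i₀) (σ.symm i₁) → G.Adj z.1 z.2}
        * ∏ i ∈ (univ.erase i₀).erase i₁, #(Q i) := by
  rw [labeledCount, placements, sum_filter]
  refine sum_congr rfl fun σ _ => ?_
  calc _ = #{w ∈ Fintype.piFinset Q | ∀ a b, (J.comap σ.symm).Adj a b → G.Adj (w a) (w b)} := by
        convert card_filter_piFinset_comp_perm σ Q J G
    _ = _ := card_filter_piFinset_semiBlowup hsb hQ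

lemma nCopies_semiBlowup (hsb : IsSemiBlowup G H i₀ i₁ P) (hQ : ∀ i, Q i ⊆ P i) :
    nCopies J G Q = (placementsAvoiding H J i₀ i₁
      + placementsThrough H J i₀ i₁ * density G (Q i₀) (Q i₁)) * (∏ i, #(Q i)) / autCount J := by
  have hpair : ∀ (c : Prop) [Decidable c], (#{z ∈ Q i₀ ×ˢ Q i₁ | c → G.Adj z.1 z.2} : ℝ)
      = (if c then density G (Q i₀) (Q i₁) else 1) * (#(Q i₀) * #(Q i₁)) := by
    intro c _
    split_ifs with hc
    · simp only [hc, true_implies, ← edgeCount_eq_density_mul, edgeCount]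
    · simp [hc]
  rw [nCopies, labeledCount_semiBlowup hsb hQ, prod_univ_eq_mul_mul_prod_erase_erase _ hsb.1]
  push_cast
  simp only [hpair, mul_assoc, ← sum_mul, ite_mul, sum_ite, sum_const, nsmul_eq_mul,
    placementsThrough, placementsAvoiding]
  ring

lemma coeff_semiBlowup (hsb : IsSemiBlowup G H i₀ i₁ P) (hQ : ∀ i, Q i ⊆ P i)
    (hQne : ∀ i, (Q i).Nonempty) (he : H.Adj i₀ i₁) :
    coeff H F G Q = autCount F * placementsThrough H H i₀ i₁ / autCount H *
      (density G (Q i₀) (Q i₁) / (placementsAvoiding H F i₀ i₁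
        + placementsThrough H F i₀ i₁ * density G (Q i₀) (Q i₁))) := by
  have hN : ((∏ i, #(Q i) : ℕ) : ℝ) ≠ 0 :=
    Nat.cast_ne_zero.2 (prod_ne_zero_iff.2 fun i _ => (hQne i).card_pos.ne')
  have hA : (autCount H : ℝ) ≠ 0 := by exact_mod_cast (autCount_pos H).ne'
  have hA' : (autCount F : ℝ) ≠ 0 := by exact_mod_cast (autCount_pos F).ne'
  rw [coeff, nCopies_semiBlowup hsb hQ, nCopies_semiBlowup hsb hQ,
    placementsAvoiding_self_eq_zero he]
  field_simp
  ring

lemma mul_nCopies_le_nCopies_semiBlowup (hsb : IsSemiBlowup G H i₀ i₁ P) (hF : F ≤ H)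
    (heF : ¬ F.Adj i₀ i₁) (hQ : ∀ i, Q i ⊆ P i) {ε δ : ℝ} (hε : 0 ≤ ε)
    (hsize : δ ^ 2 * ∏ i, (#(P i) : ℝ) ≤ ∏ i, (#(Q i) : ℝ)) (hεδ : ε * k ! ≤ δ ^ 2) :
    ε * nCopies F G P ≤ nCopies F G Q := by
  have ha : (1 : ℝ) ≤ placementsAvoiding H F i₀ i₁ := by
    exact_mod_cast placementsAvoiding_pos hF heF
  have hab : (placementsAvoiding H F i₀ i₁ + placementsThrough H F i₀ i₁ : ℝ) ≤ k ! := by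
    exact_mod_cast placementsAvoiding_add_placementsThrough_le
  have hbd : (placementsThrough H F i₀ i₁ : ℝ) * density G (P i₀) (P i₁)
      ≤ placementsThrough H F i₀ i₁ := mul_le_of_le_one_right (by positivity) (density_le_one ..)
  rw [nCopies_semiBlowup hsb (fun _ => subset_rfl), nCopies_semiBlowup hsb hQ, mul_div_assoc']
  refine div_le_div_of_nonneg_right ?_ (Nat.cast_nonneg _)
  push_cast
  calc ε * ((placementsAvoiding H F i₀ i₁ + placementsThrough H F i₀ i₁
          * density G (P i₀) (P i₁)) * ∏ i, (#(P i) : ℝ))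
      ≤ ε * k ! * ∏ i, (#(P i) : ℝ) := by rw [mul_assoc]; gcongr; linarith
    _ ≤ δ ^ 2 * ∏ i, (#(P i) : ℝ) := by gcongr
    _ ≤ placementsAvoiding H F i₀ i₁ * ∏ i, (#(Q i) : ℝ) :=
        hsize.trans (le_mul_of_one_le_left (by positivity) ha)
    _ ≤ (placementsAvoiding H F i₀ i₁ + placementsThrough H F i₀ i₁
          * density G (Q i₀) (Q i₁)) * ∏ i, (#(Q i) : ℝ) := by
        gcongr
        exact le_add_of_nonneg_right (mul_nonneg (by positivity) (density_nonneg ..))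

lemma abs_density_sub_le_of_HFRegular (hsb : IsSemiBlowup G H i₀ i₁ P) (hF : F ≤ H)
    (he : H.Adj i₀ i₁) (heF : ¬ F.Adj i₀ i₁) {ε : ℝ} (hreg : HFRegular H F G P ε)
    (hQ : ∀ i, Q i ⊆ P i) (hQne : ∀ i, (Q i).Nonempty)
    (hcount : ε * nCopies F G P ≤ nCopies F G Q) :
    |density G (Q i₀) (Q i₁) - density G (P i₀) (P i₁)| ≤ k ! ^ 3 * ε := by
  have hc := hreg Q hQ hcount
  rw [coeff_semiBlowup hsb hQ hQne he,
    coeff_semiBlowup hsb (fun _ => subset_rfl) hsb.2.2.1 he] at hc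
  refine abs_sub_le_of_abs_mul_div_sub_mul_div_le (by exact_mod_cast placementsAvoiding_pos hF heF)
    (Nat.cast_nonneg _) (by exact_mod_cast placementsAvoiding_add_placementsThrough_le) ?_
    (density_mem_Icc ..) (density_mem_Icc ..) hc
  have hAF : (1 : ℝ) ≤ autCount F := by exact_mod_cast autCount_pos F
  have hbH : (1 : ℝ) ≤ placementsThrough H H i₀ i₁ := by
    exact_mod_cast placementsThrough_self_pos he
  have hAH : (0 : ℝ) < autCount H := by exact_mod_cast autCount_pos H
  have hAHk : (autCount H : ℝ) ≤ k ! := by exact_mod_cast autCount_le_factorial H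
  rw [← mul_div_assoc, le_div_iff₀ hAH, one_mul]
  exact hAHk.trans (le_mul_of_one_le_right (by positivity) (one_le_mul_of_one_le_of_one_le hAF hbH))

end SemiBlowup

theorem stmt10_general {k : ℕ} {V : Type*} (H F : SimpleGraph (Fin k)) (i₀ i₁ : Fin k)
    (G : SimpleGraph V) (P : Fin k → Finset V) (ε : ℝ) (hε : 0 < ε)
    (hF : F ≤ H) (he : H.Adj i₀ i₁) (heF : ¬ F.Adj i₀ i₁)
    (hsb : IsSemiBlowup G H i₀ i₁ P)
    (hreg : HFRegular H F G P ε) :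
    BipRegular G (P i₀) (P i₁) (Real.sqrt ε * (k : ℝ) ^ (2 * k)) := by
  intro S hS T hT hS_ne hT_ne hS_card hT_card
  set δ := Real.sqrt ε * (k : ℝ) ^ (2 * k)
  obtain hδ | hδ := le_or_gt 1 δ
  · exact (abs_sub_le_of_nonneg_of_le (density_nonneg ..) (density_le_one ..)
      (density_nonneg ..) (density_le_one ..)).trans hδ
  set Q := update (update P i₀ S) i₁ T
  have hQ₀ : Q i₀ = S := by simp [Q, update_of_ne hsb.1]
  have hQ₁ : Q i₁ = T := by simp [Q]
  have hQ : ∀ i, Q i ⊆ P i :=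
    forall_update_update (fun i X => X ⊆ P i) (fun _ => subset_rfl) hS hT
  have hQne : ∀ i, (Q i).Nonempty :=
    forall_update_update (fun _ X => Finset.Nonempty X) hsb.2.2.1 hS_ne hT_ne
  have hcount : ε * nCopies F G P ≤ nCopies F G Q :=
    mul_nCopies_le_nCopies_semiBlowup hsb hF heF hQ hε.le
      (sq_mul_prod_card_le_prod_card_update P hsb.1 (by positivity) hS_card hT_card)
      (mul_factorial_le_sq_sqrt_mul_pow hε.le k)
  have hdens := abs_density_sub_le_of_HFRegular hsb hF he heF hreg hQ hQne hcount
  rw [hQ₀, hQ₁] at hdens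
  exact hdens.trans ((mul_comm _ _).trans_le (mul_factorial_pow_three_le hε.le hδ))

/-- If a semi-blowup of `H` along `e ∈ E(H)\E(F)` is `ε`-`(H,F)`-regular, then its
replacement bipartite graph is `(√ε·k^{2k})`-regular. -/
theorem stmt10 {k : ℕ} {V : Type*} (H F : SimpleGraph (Fin k)) (i₀ i₁ : Fin k)
    (G : SimpleGraph V) (P : Fin k → Finset V) (ε : ℝ) (hε : 0 < ε)
    (hF : F ≤ H) (hFH : F ≠ H) (he : H.Adj i₀ i₁) (heF : ¬ F.Adj i₀ i₁)
    (hsb : IsSemiBlowup G H i₀ i₁ P)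
    (hreg : HFRegular H F G P ε) :
    BipRegular G (P i₀) (P i₁) (Real.sqrt ε * (k : ℝ) ^ (2 * k)) :=
  stmt10_general H F i₀ i₁ G P ε hε hF he heF hsb hreg
end
end
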